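/- Let (X, ≤) be an inf-semilattice with a locally compact Hausdorff topology such that the meet (x, y) ↦ x ⊓ y is continuous from X × X to X, and assume that for all x ≤ y the order interval [x, y] is connected. If ⟨x_λ⟩ and ⟨y_λ⟩ are nets in X and x, y ∈ X are such that x_λ↓ → x↓ and y_λ↓ → y↓ in C(X) with the Fell topology, then x_λ↓ ∩ y_λ↓ → x↓ ∩ y↓ in the Fell topology; that is, set intersection is continuous on the set of principal ideals of X with the relative Fell topology. -/

import Mathlib

open Set Filter Topology TopologicalSpace

/-- The Fell topology on the hyperspace of closed subsets of `X`: it is generated by the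
sets `{A : A ∩ O ≠ ∅}` for `O` open and the sets `{A : A ∩ K = ∅}` for `K` compact. -/
instance fellTopology (X : Type*) [TopologicalSpace X] : TopologicalSpace (Closeds X) :=
  TopologicalSpace.generateFrom
    ({S | ∃ O : Set X, IsOpen O ∧ S = {A : Closeds X | ((A : Set X) ∩ O).Nonempty}} ∪
     {S | ∃ K : Set X, IsCompact K ∧ S = {A : Closeds X | (A : Set X) ∩ K = ∅}})

/-- In a Hausdorff topological ∧-semilattice, every principal ideal is closed. -/
lemma isClosed_Iic_of_continuous_inf {X : Type*} [SemilatticeInf X] [TopologicalSpace X]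
    [T2Space X] (hmeet : Continuous fun p : X × X => p.1 ⊓ p.2) (x : X) :
    IsClosed (Set.Iic x) := by
  have e : Set.Iic x = {z : X | z ⊓ x = z} := by ext z; simp [inf_eq_left]
  rw [e]
  exact isClosed_eq (hmeet.comp (continuous_id.prodMk continuous_const)) continuous_id

lemma fell_hit {X : Type*} [TopologicalSpace X] {Λ : Type*} {f : Filter Λ}
    {A : Λ → Closeds X} {B : Closeds X} (h : Tendsto A f (𝓝 B))
    {U : Set X} (hU : IsOpen U) (hB : ((B : Set X) ∩ U).Nonempty) :
    ∀ᶠ l in f, ((A l : Set X) ∩ U).Nonempty := by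
  have ho : IsOpen {C : Closeds X | ((C : Set X) ∩ U).Nonempty} :=
    TopologicalSpace.isOpen_generateFrom_of_mem (Or.inl ⟨U, hU, rfl⟩)
  exact h.eventually (ho.mem_nhds hB)

lemma fell_miss {X : Type*} [TopologicalSpace X] {Λ : Type*} {f : Filter Λ}
    {A : Λ → Closeds X} {B : Closeds X} (h : Tendsto A f (𝓝 B))
    {K : Set X} (hK : IsCompact K) (hB : (B : Set X) ∩ K = ∅) :
    ∀ᶠ l in f, (A l : Set X) ∩ K = ∅ := by
  have ho : IsOpen {C : Closeds X | (C : Set X) ∩ K = ∅} :=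
    TopologicalSpace.isOpen_generateFrom_of_mem (Or.inr ⟨K, hK, rfl⟩)
  exact h.eventually (ho.mem_nhds hB)

/-- From Fell convergence to `Iic z` and a point `k ∉ Iic z` in a locally compact
Hausdorff space, get a compact neighborhood of `k` eventually missed by the net. -/
lemma miss_nbhd {X : Type*} [SemilatticeInf X] [TopologicalSpace X] [T2Space X]
    [LocallyCompactSpace X] (hmeet : Continuous fun p : X × X => p.1 ⊓ p.2)
    {Λ : Type*} {f : Filter Λ} {zl : Λ → X} {z : X}
    (hz : Tendsto
      (fun l : Λ => (⟨Set.Iic (zl l), isClosed_Iic_of_continuous_inf hmeet (zl l)⟩ : Closeds X))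
      f (𝓝 (⟨Set.Iic z, isClosed_Iic_of_continuous_inf hmeet z⟩ : Closeds X)))
    {k : X} (hk : k ∉ Set.Iic z) :
    ∃ V : Set X, k ∈ interior V ∧ ∀ᶠ l in f, Set.Iic (zl l) ∩ V = ∅ := by
  have hco : (Set.Iic z)ᶜ ∈ 𝓝 k :=
    (isClosed_Iic_of_continuous_inf hmeet z).isOpen_compl.mem_nhds hk
  obtain ⟨V, hVn, hVsub, hVc⟩ := local_compact_nhds hco
  refine ⟨V, mem_interior_iff_mem_nhds.2 hVn, ?_⟩
  have hdisj : Set.Iic z ∩ V = ∅ := by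
    rw [Set.eq_empty_iff_forall_notMem]
    rintro w ⟨hw1, hw2⟩
    exact hVsub hw2 hw1
  exact fell_miss hz hVc hdisj
/-- Let `(X, ≤)` be a locally compact, order-connected Hausdorff topological
∧-semilattice.  If nets `⟨x_λ⟩`, `⟨y_λ⟩` (over the same directed set) are such that
`(x_λ)↓ → x↓` and `(y_λ)↓ → y↓` in the Fell topology, then
`(x_λ)↓ ∩ (y_λ)↓ → x↓ ∩ y↓` in the Fell topology: intersection is continuous on the set of
principal ideals of `X`. -/
theorem tendsto_inter_principalIdeals_fell
    {X : Type*} [SemilatticeInf X] [TopologicalSpace X] [T2Space X] [LocallyCompactSpace X]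
    (hmeet : Continuous fun p : X × X => p.1 ⊓ p.2)
    (hconn : ∀ x y : X, x ≤ y → IsConnected (Set.Icc x y))
    {Λ : Type*} [Preorder Λ] [IsDirected Λ (· ≤ ·)] [Nonempty Λ]
    (xl yl : Λ → X) (x y : X)
    (hx : Filter.Tendsto
      (fun l : Λ => (⟨Set.Iic (xl l), isClosed_Iic_of_continuous_inf hmeet (xl l)⟩ : Closeds X))
      Filter.atTop (𝓝 (⟨Set.Iic x, isClosed_Iic_of_continuous_inf hmeet x⟩ : Closeds X)))
    (hy : Filter.Tendsto
      (fun l : Λ => (⟨Set.Iic (yl l), isClosed_Iic_of_continuous_inf hmeet (yl l)⟩ : Closeds X))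
      Filter.atTop (𝓝 (⟨Set.Iic y, isClosed_Iic_of_continuous_inf hmeet y⟩ : Closeds X))) :
    Filter.Tendsto
      (fun l : Λ => (⟨Set.Iic (xl l) ∩ Set.Iic (yl l),
        (isClosed_Iic_of_continuous_inf hmeet (xl l)).inter
          (isClosed_Iic_of_continuous_inf hmeet (yl l))⟩ : Closeds X))
      Filter.atTop
      (𝓝 (⟨Set.Iic x ∩ Set.Iic y,
        (isClosed_Iic_of_continuous_inf hmeet x).inter
          (isClosed_Iic_of_continuous_inf hmeet y)⟩ : Closeds X)) := by
  refine TopologicalSpace.tendsto_nhds_generateFrom_iff.2 ?_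
  rintro S (⟨O, hO, rfl⟩ | ⟨K, hK, rfl⟩) haS
  · -- hit case
    obtain ⟨z, ⟨hzx, hzy⟩, hzO⟩ := haS
    have hzz : (z, z) ∈ {p : X × X | p.1 ⊓ p.2 ∈ O} := by simpa using hzO
    obtain ⟨U, V, hU, hV, hzU, hzV, hUV⟩ :=
      isOpen_prod_iff.1 (hO.preimage hmeet) z z hzz
    have h1 := fell_hit hx hU ⟨z, hzx, hzU⟩
    have h2 := fell_hit hy hV ⟨z, hzy, hzV⟩
    filter_upwards [h1, h2] with l ⟨u, hux, huU⟩ ⟨v, hvy, hvV⟩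
    exact ⟨u ⊓ v, ⟨le_trans inf_le_left hux, le_trans inf_le_right hvy⟩,
      hUV (Set.mk_mem_prod huU hvV)⟩
  · -- miss case
    simp only [mem_setOf_eq] at haS
    have main : ∀ k ∈ K, ∃ V : Set X, k ∈ interior V ∧
        ∀ᶠ l in atTop, (Set.Iic (xl l) ∩ Set.Iic (yl l)) ∩ V = ∅ := by
      intro k hk
      have hk' : k ∉ Set.Iic x ∨ k ∉ Set.Iic y := by
        by_contra h
        push_neg at h
        exact absurd haS (Set.nonempty_iff_ne_empty.1 ⟨k, ⟨h.1, h.2⟩, hk⟩)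
      rcases hk' with hkx | hky
      · obtain ⟨V, hkV, hev⟩ := miss_nbhd hmeet hx hkx
        refine ⟨V, hkV, hev.mono fun l hl => ?_⟩
        rw [Set.eq_empty_iff_forall_notMem] at hl ⊢
        rintro w ⟨⟨hw1, _⟩, hw3⟩
        exact hl w ⟨hw1, hw3⟩
      · obtain ⟨V, hkV, hev⟩ := miss_nbhd hmeet hy hky
        refine ⟨V, hkV, hev.mono fun l hl => ?_⟩
        rw [Set.eq_empty_iff_forall_notMem] at hl ⊢
        rintro w ⟨⟨_, hw2⟩, hw3⟩
        exact hl w ⟨hw2, hw3⟩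
    choose! V hVk hVev using main
    obtain ⟨t, htK, htfin, hcover⟩ := hK.elim_finite_subcover_image
      (fun k _ => isOpen_interior) (fun w hw => Set.mem_iUnion₂.2 ⟨w, hw, hVk w hw⟩)
    have hfin : ∀ᶠ l in atTop, ∀ k ∈ t, (Set.Iic (xl l) ∩ Set.Iic (yl l)) ∩ V k = ∅ := by
      rw [eventually_all_finite htfin]
      exact fun k hk => hVev k (htK hk)
    filter_upwards [hfin] with l hl
    show Set.Iic (xl l) ∩ Set.Iic (yl l) ∩ K = ∅
    rw [Set.eq_empty_iff_forall_notMem]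
    rintro w ⟨hw1, hw2⟩
    obtain ⟨k, hkt, hwk⟩ := Set.mem_iUnion₂.1 (hcover hw2)
    have := hl k hkt
    rw [Set.eq_empty_iff_forall_notMem] at this
    exact this w ⟨hw1, interior_subset hwk⟩
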